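/- arXiv:1903.10056 — 2 statements merged into one kernel-verified Lean document; each statement's English description precedes it below -/
import Mathlib

section
/- For a connection ∇ on a Lie algebra with curvature R, torsion T, dual connection ∇̄ with curvature R̄, the covariant derivative of torsion satisfies (∇_Z T)(X,Y) = R̄(X,Y)Z + R(Y,Z)X + R(Z,X)Y for all X, Y, Z. -/
/-- Torsion of a connection on a Lie algebra. -/
def torsion {L : Type*} [LieRing L] (D : L → L → L) (X Y : L) : L := D X Y - D Y X - ⁅X, Y⁆

/-- Curvature of a connection on a Lie algebra. -/
def curvature {L : Type*} [LieRing L] (D : L → L → L) (X Y Z : L) : L :=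
  D X (D Y Z) - D Y (D X Z) - D ⁅X, Y⁆ Z

/-- Dual connection. -/
def dualConn {L : Type*} [LieRing L] (D : L → L → L) (X Y : L) : L := D Y X + ⁅X, Y⁆

/-- Covariant derivative of torsion: `(∇_Z T)(X,Y)`. -/
def covTorsion {L : Type*} [LieRing L] (D : L → L → L) (Z X Y : L) : L :=
  D Z (torsion D X Y) - torsion D (D Z X) Y - torsion D X (D Z Y)

section Biadditive

variable {L : Type*} [LieRing L] (D : L →+ L →+ L) (X Y Z : L)

/-- The Jacobi identity removes all double brackets from `R̄(X,Y)Z`. -/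
theorem curvature_dualConn :
    curvature (dualConn fun X Y => D X Y) X Y Z
      = D (D Z Y) X + D ⁅Y, Z⁆ X + ⁅X, D Z Y⁆
        - D (D Z X) Y - D ⁅X, Z⁆ Y - ⁅Y, D Z X⁆ - D Z ⁅X, Y⁆ := by
  simp only [curvature, dualConn, map_add, AddMonoidHom.add_apply, lie_add]
  rw [leibniz_lie X Y Z]
  abel

/- After expanding `R̄` as above, `∇_{⟦Y,Z⟧} X` cancels against `R(Y,Z)X` and, by skew-symmetry of
the bracket, `∇_{⟦X,Z⟧} Y` against `R(Z,X)Y`; the remaining terms match `(∇_Z T)(X,Y)` one by one. -/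
theorem covTorsion_eq_curvature_dualConn_add :
    covTorsion (fun X Y => D X Y) Z X Y
      = curvature (dualConn fun X Y => D X Y) X Y Z
        + curvature (fun X Y => D X Y) Y Z X
        + curvature (fun X Y => D X Y) Z X Y := by
  rw [curvature_dualConn]
  simp only [covTorsion, torsion, curvature, map_sub]
  rw [← lie_skew X Z, ← lie_skew (D Z X) Y, map_neg, AddMonoidHom.neg_apply]
  abel

end Biadditive

theorem covTorsion_eq_general {K : Type*} [Field K]
    {L : Type*} [LieRing L] [LieAlgebra K L] (D : L →ₗ[K] L →ₗ[K] L) :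
    ∀ X Y Z : L,
      covTorsion (fun X Y => D X Y) Z X Y
        = curvature (dualConn (fun X Y => D X Y)) X Y Z
          + curvature (fun X Y => D X Y) Y Z X
          + curvature (fun X Y => D X Y) Z X Y :=
  covTorsion_eq_curvature_dualConn_add (LinearMap.toAddMonoidHom'.comp D.toAddMonoidHom)

/-- `(∇_Z T)(X,Y) = R̄(X,Y)Z + R(Y,Z)X + R(Z,X)Y`. -/
theorem covTorsion_eq {K : Type*} [Field K] [CharZero K]
    {L : Type*} [LieRing L] [LieAlgebra K L] (D : L →ₗ[K] L →ₗ[K] L) :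
    ∀ X Y Z : L,
      covTorsion (fun X Y => D X Y) Z X Y
        = curvature (dualConn (fun X Y => D X Y)) X Y Z
          + curvature (fun X Y => D X Y) Y Z X
          + curvature (fun X Y => D X Y) Z X Y :=
  covTorsion_eq_general D
end

section
/- For a connection ∇ on a Lie algebra, the cyclic sum identity ∑_cyc T(X, T(Y,Z)) = ∑_cyc R(X,Y)Z + ∑_cyc R̄(X,Y)Z holds, where the cyclic sums run over cyclic permutations of (X,Y,Z). -/
/-- Cyclic sum of a trilinear expression. -/
def cyclicSum {L : Type*} [AddCommGroup L] (f : L → L → L → L) (X Y Z : L) : L :=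
  f X Y Z + f Y Z X + f Z X Y

/-! The first Bianchi identity of a connection on a Lie algebra reads
`∑_cyc R(X,Y)Z = ∑_cyc (∇_X T(Y,Z) − T(⟦X,Y⟧,Z))`. The dual connection has torsion `−T`, so adding
its Bianchi identity to that of `∇` cancels the terms `T(⟦X,Y⟧,Z)` and leaves
`∑_cyc (∇_X − ∇̄_X) T(Y,Z)`, while `∇_X W − ∇̄_X W = T(X,W)`. -/

theorem cyclicSum_add {M : Type*} [AddCommGroup M] (f g : M → M → M → M) (X Y Z : M) :
    cyclicSum f X Y Z + cyclicSum g X Y Z = cyclicSum (fun X Y Z => f X Y Z + g X Y Z) X Y Z := by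
  simp only [cyclicSum]
  abel

section

variable {L : Type*} [LieRing L]

theorem torsion_dualConn (D : L → L → L) (X Y : L) :
    torsion (dualConn D) X Y = -torsion D X Y := by
  simp only [torsion, dualConn, ← lie_skew Y X]
  abel

theorem sub_dualConn_eq_torsion (D : L → L → L) (X Y : L) :
    D X Y - dualConn D X Y = torsion D X Y := by
  rw [torsion, dualConn, sub_sub]

theorem dualConn_sub_right {D : L → L → L} (hD : ∀ X Y Z, D (X - Y) Z = D X Z - D Y Z)
    (X Y Z : L) : dualConn D X (Y - Z) = dualConn D X Y - dualConn D X Z := by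
  simp only [dualConn, hD, lie_sub]
  abel

theorem cyclicSum_curvature {D : L → L → L} (hD : ∀ X Y Z, D X (Y - Z) = D X Y - D X Z)
    (X Y Z : L) :
    cyclicSum (curvature D) X Y Z
      = cyclicSum (fun X Y Z => D X (torsion D Y Z) - torsion D ⁅X, Y⁆ Z) X Y Z := by
  have jacobi : ⁅⁅X, Y⁆, Z⁆ + ⁅⁅Y, Z⁆, X⁆ + ⁅⁅Z, X⁆, Y⁆ = 0 := by
    rw [← lie_skew ⁅X, Y⁆, ← lie_skew ⁅Y, Z⁆, ← lie_skew ⁅Z, X⁆, ← neg_add, ← neg_add,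
      lie_jacobi, neg_zero]
  simp only [cyclicSum, curvature, torsion, hD]
  linear_combination (norm := abel) -jacobi

theorem cyclicSum_curvature_dualConn {D : L → L → L} (hD : ∀ X Y Z, D (X - Y) Z = D X Z - D Y Z)
    (X Y Z : L) :
    cyclicSum (curvature (dualConn D)) X Y Z
      = cyclicSum (fun X Y Z => torsion D ⁅X, Y⁆ Z - dualConn D X (torsion D Y Z)) X Y Z := by
  have dualConn_neg_right X W : dualConn D X (-W) = -dualConn D X W :=
    (AddMonoidHom.ofMapSub _ (dualConn_sub_right hD X)).map_neg W
  rw [cyclicSum_curvature (dualConn_sub_right hD)]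
  simp only [torsion_dualConn, dualConn_neg_right, sub_neg_eq_add, neg_add_eq_sub]

end

theorem cyclic_torsion_identity_general {K : Type*} [Field K]
    {L : Type*} [LieRing L] [LieAlgebra K L] (D : L →ₗ[K] L →ₗ[K] L) :
    ∀ X Y Z : L,
      cyclicSum (fun X Y Z => torsion (fun X Y => D X Y) X (torsion (fun X Y => D X Y) Y Z)) X Y Z
        = cyclicSum (curvature (fun X Y => D X Y)) X Y Z
          + cyclicSum (curvature (dualConn (fun X Y => D X Y))) X Y Z := by
  intro X Y Z
  rw [cyclicSum_curvature (fun X _ _ => map_sub (D X) _ _),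
    cyclicSum_curvature_dualConn (fun _ _ Z => by rw [map_sub, LinearMap.sub_apply]),
    cyclicSum_add]
  congr 1
  funext A B C
  rw [sub_add_sub_cancel]
  exact (sub_dualConn_eq_torsion _ _ _).symm

/-- `∑_cyc T(X, T(Y,Z)) = ∑_cyc R(X,Y)Z + ∑_cyc R̄(X,Y)Z`. -/
theorem cyclic_torsion_identity {K : Type*} [Field K] [CharZero K]
    {L : Type*} [LieRing L] [LieAlgebra K L] (D : L →ₗ[K] L →ₗ[K] L) :
    ∀ X Y Z : L,
      cyclicSum (fun X Y Z => torsion (fun X Y => D X Y) X (torsion (fun X Y => D X Y) Y Z)) X Y Z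
        = cyclicSum (curvature (fun X Y => D X Y)) X Y Z
          + cyclicSum (curvature (dualConn (fun X Y => D X Y))) X Y Z :=
  cyclic_torsion_identity_general D
end
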